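/- With Ỹ_v as defined (λ > 0 fixed, a ≥ 6·exp(120(λ+1)), K = a², δ = 1/(K(1+λ))), if v ≥ a/3 then E[Ỹ_v] ≤ −40. More precisely, E[Ỹ_v] ≤ 1 − (log(a/3) − log 2)/(2(λ+1)), and this bound is at most −40 when a ≥ 6·exp(120(λ+1)). -/

import Mathlib

open Finset

lemma arw_telescope_inv (n : ℕ) :
    ∑ i ∈ range n, (1 / (((i : ℝ) + 1) * ((i : ℝ) + 2))) = 1 - 1 / ((n : ℝ) + 1) := by
  have h := Finset.sum_range_sub' (f := fun i : ℕ => 1 / ((i : ℝ) + 1)) n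
  have he : ∀ i ∈ range n, (1 / (((i : ℝ) + 1) * ((i : ℝ) + 2)))
      = (1 / ((i : ℝ) + 1) - 1 / (((i + 1 : ℕ) : ℝ) + 1)) := by
    intro i _
    push_cast
    have h1 : ((i : ℝ) + 1) ≠ 0 := by positivity
    have h2 : ((i : ℝ) + 2) ≠ 0 := by positivity
    field_simp
    ring_nf
  rw [Finset.sum_congr rfl he, h]
  norm_num

lemma arw_harm_lb (n : ℕ) :
    Real.log ((n : ℝ) + 2) - Real.log 2 ≤ ∑ i ∈ range n, 1 / ((i : ℝ) + 2) := by
  have h := Finset.sum_range_sub (f := fun i : ℕ => Real.log ((i : ℝ) + 2)) n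
  have : Real.log ((n : ℝ) + 2) - Real.log 2
      = ∑ i ∈ range n, (Real.log (((i + 1 : ℕ) : ℝ) + 2) - Real.log ((i : ℝ) + 2)) := by
    rw [h]; norm_num
  rw [this]
  apply Finset.sum_le_sum
  intro i _
  have h2 : (0 : ℝ) < (i : ℝ) + 2 := by positivity
  have h3 : (0 : ℝ) < (i : ℝ) + 3 := by positivity
  have hlog := Real.log_le_sub_one_of_pos (x := ((i : ℝ) + 3) / ((i : ℝ) + 2)) (by positivity)
  rw [Real.log_div (by positivity) (by positivity)] at hlog
  push_cast
  have : ((i : ℝ) + 3) / ((i : ℝ) + 2) - 1 = 1 / ((i : ℝ) + 2) := by field_simp; norm_num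
  calc Real.log ((i : ℝ) + 1 + 2) - Real.log ((i : ℝ) + 2)
      = Real.log ((i : ℝ) + 3) - Real.log ((i : ℝ) + 2) := by
        rw [show ((i:ℝ)+1+2) = ((i:ℝ)+3) by ring]
    _ ≤ ((i : ℝ) + 3) / ((i : ℝ) + 2) - 1 := hlog
    _ = 1 / ((i : ℝ) + 2) := this

set_option maxHeartbeats 1000000 in
/-- if `a ≥ 6·exp(120(λ+1))` and `v ≥ a/3`, then the expectation of
`Ỹ_v` is at most `1 − (log(a/3) − log 2)/(2(λ+1))`, which is at most `−40`. -/
theorem arw_Ytilde_expectation_bound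
    (lam : ℝ) (hlam : 0 < lam)
    (a : ℕ) (haeven : Even a)
    (ha : 6 * Real.exp (120 * (lam + 1)) ≤ (a : ℝ))
    (K : ℕ) (hK : K = a ^ 2)
    (δ : ℝ) (hδ : δ = 1 / (K * (1 + lam)))
    (v : ℕ) (hv : (a : ℝ) / 3 ≤ (v : ℝ)) (hva : v ≤ a)
    (p : ℤ → ℝ)
    (hp : p = fun z : ℤ =>
      if z = 1 then lam / (1 + lam)
      else if z = 0 then (1 / 2) / (1 + lam) + δ
      else if z = -(v : ℤ) then
        (1 / 2) / (1 + lam) - δ -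
          ∑ k ∈ Finset.Icc 1 (v - 1),
            (1 / 2) / (1 + lam) * (1 / ((k : ℝ) * (k + 1)))
      else if -(v : ℤ) < z ∧ z < 0 then
        (1 / 2) / (1 + lam) * (1 / (((-z : ℤ) : ℝ) * (((-z : ℤ) : ℝ) + 1)))
      else 0) :
    (∑ z ∈ Finset.Icc (-(v : ℤ)) 1, (z : ℝ) * p z
        ≤ 1 - (Real.log ((a : ℝ) / 3) - Real.log 2) / (2 * (lam + 1))) ∧
    1 - (Real.log ((a : ℝ) / 3) - Real.log 2) / (2 * (lam + 1)) ≤ -40 := by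
  have h1lam : (0 : ℝ) < 1 + lam := by linarith
  have hexp : (1 : ℝ) ≤ Real.exp (120 * (lam + 1)) := Real.one_le_exp (by positivity)
  have ha6 : (6 : ℝ) ≤ (a : ℝ) := le_trans (by nlinarith) ha
  have hv2 : (2 : ℝ) ≤ (v : ℝ) := by linarith
  have hvn : 2 ≤ v := by exact_mod_cast hv2
  -- second part
  have hlog2 : Real.log 2 + 120 * (lam + 1) ≤ Real.log ((a : ℝ) / 3) := by
    have h2e : (2 : ℝ) * Real.exp (120 * (lam + 1)) ≤ (a : ℝ) / 3 := by linarith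
    have := Real.log_le_log (by positivity) h2e
    rwa [Real.log_mul (by norm_num) (Real.exp_ne_zero _), Real.log_exp] at this
  have hpart2 : 1 - (Real.log ((a : ℝ) / 3) - Real.log 2) / (2 * (lam + 1)) ≤ -40 := by
    have h60 : (60 : ℝ) ≤ (Real.log ((a : ℝ) / 3) - Real.log 2) / (2 * (lam + 1)) := by
      rw [le_div_iff₀ (by positivity)]
      linarith
    linarith
  refine ⟨?_, hpart2⟩
  set D : ℝ := Real.log ((a : ℝ) / 3) - Real.log 2 with hDdef
  obtain ⟨w, rfl⟩ : ∃ w, v = w + 1 + 1 := ⟨v - 2, by omega⟩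
  set c : ℝ := 1 / 2 / (1 + lam) with hc
  have hδval : δ = 1 / ((a : ℝ) ^ 2 * (1 + lam)) := by rw [hδ, hK]; push_cast; ring
  have hδpos : 0 < δ := by rw [hδval]; positivity
  have hwa : ((w : ℝ) + 2) ≤ (a : ℝ) := by
    have : ((w + 1 + 1 : ℕ) : ℝ) ≤ (a : ℝ) := by exact_mod_cast hva
    push_cast at this; linarith
  -- evaluation of p at the points
  have hb0 : p 1 = lam / (1 + lam) := by rw [hp]; norm_num
  have hbv : p (1 - ((w + 1 + 1 + 1 : ℕ) : ℤ)) = c - δ - ((w : ℝ) + 1) / ((w : ℝ) + 2) * c := by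
    have hS : ∑ k ∈ Finset.Icc 1 (w + 1 + 1 - 1), c * (1 / ((k : ℝ) * ((k : ℝ) + 1)))
        = ((w : ℝ) + 1) / ((w : ℝ) + 2) * c := by
      have hmap : Finset.Icc 1 (w + 1 + 1 - 1)
          = Finset.map ⟨fun i : ℕ => i + 1, show Function.Injective (fun i : ℕ => i + 1) from by intro x y h; simp at h; omega⟩
            (Finset.range (w + 1)) := by
        ext k
        simp only [Finset.mem_Icc, Finset.mem_map, Finset.mem_range,
          Function.Embedding.coeFn_mk]
        constructor
        · rintro ⟨h1, h2⟩; exact ⟨k - 1, by omega, by omega⟩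
        · rintro ⟨x, hx, rfl⟩; omega
      rw [hmap, Finset.sum_map]
      simp only [Function.Embedding.coeFn_mk]
      have he : ∀ i ∈ Finset.range (w + 1),
          c * (1 / (((i + 1 : ℕ) : ℝ) * (((i + 1 : ℕ) : ℝ) + 1)))
          = c * (1 / (((i : ℝ) + 1) * ((i : ℝ) + 2))) := by
        intro i _; push_cast; ring_nf
      rw [Finset.sum_congr rfl he, ← Finset.mul_sum, arw_telescope_inv (w + 1)]
      have : (((w + 1 : ℕ) : ℝ) + 1) = (w : ℝ) + 2 := by push_cast; ring
      rw [this]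
      have h2 : ((w : ℝ) + 2) ≠ 0 := by positivity
      field_simp
      ring
    rw [hp]
    simp only
    rw [if_neg (by omega), if_neg (by omega), if_pos (by push_cast; omega), hS]
  have hbm : ∀ i ∈ Finset.range (w + 1),
      ((1 - ((i + 1 + 1 : ℕ) : ℤ) : ℤ) : ℝ) * p (1 - ((i + 1 + 1 : ℕ) : ℤ))
      = -(c / ((i : ℝ) + 2)) := by
    intro i hi
    rw [Finset.mem_range] at hi
    rw [hp]
    simp only
    rw [if_neg (by omega), if_neg (by omega), if_neg (by push_cast; omega),
      if_pos (by constructor <;> [push_cast; skip] <;> omega)]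
    have hcast : ((-(1 - ((i + 1 + 1 : ℕ) : ℤ)) : ℤ) : ℝ) = (i : ℝ) + 1 := by push_cast; ring
    rw [hcast]
    have hcast2 : ((1 - ((i + 1 + 1 : ℕ) : ℤ) : ℤ) : ℝ) = -((i : ℝ) + 1) := by push_cast; ring
    rw [hcast2]
    have h1 : ((i : ℝ) + 1) ≠ 0 := by positivity
    have h2 : ((i : ℝ) + 2) ≠ 0 := by positivity
    field_simp
    ring
  -- reindex the sum
  have hset : Finset.Icc (-((w + 1 + 1 : ℕ) : ℤ)) 1
      = Finset.map ⟨fun k : ℕ => 1 - (k : ℤ), show Function.Injective (fun k : ℕ => 1 - (k : ℤ)) from by intro x y h; simp at h; omega⟩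
          (Finset.range (w + 1 + 1 + 1 + 1)) := by
    ext z
    simp only [Finset.mem_Icc, Finset.mem_map, Finset.mem_range, Function.Embedding.coeFn_mk]
    constructor
    · rintro ⟨h1, h2⟩; exact ⟨(1 - z).toNat, by omega, by omega⟩
    · rintro ⟨k, hk, rfl⟩; omega
  rw [hset, Finset.sum_map]
  simp only [Function.Embedding.coeFn_mk]
  rw [Finset.sum_range_succ, Finset.sum_range_succ', Finset.sum_range_succ']
  rw [Finset.sum_congr rfl hbm]
  -- simplify boundary terms
  have e0 : (1 - ((0 : ℕ) : ℤ)) = (1 : ℤ) := by norm_num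
  have e1 : (1 - ((0 + 1 : ℕ) : ℤ)) = (0 : ℤ) := by norm_num
  rw [e0, e1, hb0, hbv]
  -- now pure arithmetic with the harmonic sum
  have hH := arw_harm_lb (w + 1)
  set H : ℝ := ∑ i ∈ range (w + 1), 1 / ((i : ℝ) + 2) with hHdef
  have hA : ∑ i ∈ Finset.range (w + 1), -(c / ((i : ℝ) + 2)) = -(c * H) := by
    rw [hHdef, Finset.mul_sum, ← Finset.sum_neg_distrib]
    exact Finset.sum_congr rfl fun i _ => by ring
  rw [hA]
  have hDlb : D ≤ H := by
    rw [hDdef]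
    have hv' : (a : ℝ) / 3 ≤ (w : ℝ) + 3 := by push_cast at hv; linarith
    have hlog3 : Real.log ((a : ℝ) / 3) ≤ Real.log (((w + 1 : ℕ) : ℝ) + 2) := by
      apply Real.log_le_log (by positivity)
      push_cast
      linarith
    linarith
  have hD0 : (0 : ℝ) ≤ D := by rw [hDdef]; nlinarith
  have hcpos : 0 < c := by rw [hc]; positivity
  have hcH : (D) / (2 * (lam + 1)) ≤ c * H := by
    have h1 : (D) / (2 * (lam + 1))
        = c * (D) := by
      rw [show (2:ℝ) * (lam + 1) = 2 * (1 + lam) by ring, hc, div_div,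
        one_div_mul_eq_div]
    rw [h1]
    exact mul_le_mul_of_nonneg_left hDlb hcpos.le
  -- the remaining deterministic part
  have hcast3 : ((1 - ((w + 1 + 1 + 1 : ℕ) : ℤ) : ℤ) : ℝ) = -((w : ℝ) + 2) := by push_cast; ring
  rw [hcast3]
  have hkey : -((w : ℝ) + 2) * (c - δ - ((w : ℝ) + 1) / ((w : ℝ) + 2) * c)
      = -c + ((w : ℝ) + 2) * δ := by
    have h2 : ((w : ℝ) + 2) ≠ 0 := by positivity
    field_simp
    ring
  rw [hkey]
  have hδbd : ((w : ℝ) + 2) * δ ≤ c := by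
    have hapos : (0 : ℝ) < (a : ℝ) := by linarith
    have h1 : ((w : ℝ) + 2) * δ ≤ (a : ℝ) * δ :=
      mul_le_mul_of_nonneg_right hwa hδpos.le
    have h2 : (a : ℝ) * δ = 1 / ((a : ℝ) * (1 + lam)) := by
      rw [hδval]; field_simp
    have h3 : 1 / ((a : ℝ) * (1 + lam)) ≤ 1 / (2 * (1 + lam)) := by
      apply div_le_div_of_nonneg_left (by norm_num) (by positivity)
      nlinarith
    have h4 : c = 1 / (2 * (1 + lam)) := by rw [hc, div_div]
    linarith
  have hlamle : lam / (1 + lam) ≤ 1 := by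
    rw [div_le_one h1lam]; linarith
  linarith
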